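/- arXiv:1906.05266 — 5 statements merged into one kernel-verified Lean document; each statement's English description precedes it below -/
import Mathlib

section
/- For any string X = x_1 x_2 … x_l in which all characters are pairwise distinct (an exemplar string), the string X' = x_1 x_1 x_2 x_2 … x_l x_l obtained by doubling every character satisfies dist_TD(X, X') = l. -/
/-!
A duplication `AYB ⇒ AYYB` creates only one new pair of adjacent letters, at the seam between
the two copies of `Y`, so it adds at most one letter `c` whose square `cc` is a factor. No such
letter exists in an exemplar string `X`, while every letter of `X` is one in the doubled string;
hence at least `|X|` duplications are needed, and doubling the letters one by one uses exactly
`|X|`.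
-/

variable {α : Type*}

/-- A single tandem duplication: `AXB ⇒ AXXB` with `X` nonempty. -/
def TDStep (S T : List α) : Prop :=
  ∃ A X B : List α, X ≠ [] ∧ S = A ++ X ++ B ∧ T = A ++ X ++ X ++ B

/-- `TDk k S T`: `T` is obtained from `S` by exactly `k` tandem duplications. -/
def TDk : ℕ → List α → List α → Prop
  | 0, S, T => S = T
  | n+1, S, T => ∃ U, TDStep S U ∧ TDk n U T

/-- The tandem duplication distance, `⊤` if `T` is not reachable from `S`. -/
noncomputable def distTD (S T : List α) : ℕ∞ :=
  sInf {n : ℕ∞ | ∃ m : ℕ, n = m ∧ TDk m S T}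

theorem TDStep.append_left (P : List α) {S T : List α} (h : TDStep S T) :
    TDStep (P ++ S) (P ++ T) := by
  obtain ⟨A, Y, B, hY, rfl, rfl⟩ := h
  exact ⟨P ++ A, Y, B, hY, by simp, by simp⟩

theorem TDk.append_left (P : List α) : ∀ {k : ℕ} {S T : List α}, TDk k S T →
    TDk k (P ++ S) (P ++ T)
  | 0, _, _, h => congrArg (P ++ ·) h
  | _ + 1, _, _, ⟨U, hU, hT⟩ => ⟨P ++ U, hU.append_left P, hT.append_left P⟩

theorem TDk.self_flatMap_pair (X : List α) : TDk X.length X (X.flatMap fun x => [x, x]) := by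
  induction X with
  | nil => rfl
  | cons a X ih =>
    refine ⟨a :: a :: X, ⟨[], [a], X, List.cons_ne_nil a [], rfl, rfl⟩, ?_⟩
    simpa using ih.append_left [a, a]

theorem List.Nodup.not_pair_infix {l : List α} (hl : l.Nodup) (c : α) : ¬ [c, c] <:+: l :=
  fun h => by simpa using hl.sublist h.sublist

theorem List.pair_infix_flatMap_pair {c : α} {X : List α} (h : c ∈ X) :
    [c, c] <:+: X.flatMap fun x => [x, x] := by
  obtain ⟨s, t, rfl⟩ := List.append_of_mem h
  simp only [List.flatMap_append, List.flatMap_cons]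
  exact List.infix_append_of_infix_right (List.infix_append_left (l₁ := [c, c]))

theorem List.pair_infix_append {c : α} {P Q : List α} (h : [c, c] <:+: P ++ Q) :
    [c, c] <:+: P ∨ [c, c] <:+: Q ∨ Q.head? = some c := by
  rcases List.infix_append_iff_ne_nil.mp h with h | h | ⟨l₁, l₂, h₁, h₂, hl, -, hQ⟩
  · exact Or.inl h
  · exact Or.inr (Or.inl h)
  · obtain ⟨a, l₁, rfl⟩ := List.exists_cons_of_ne_nil h₁
    simp only [List.cons_append, List.cons.injEq, List.singleton_eq_append_iff, h₂, and_false,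
      or_false] at hl
    obtain ⟨t, rfl⟩ := hl.2.2 ▸ hQ
    exact Or.inr (Or.inr rfl)

theorem TDStep.exists_new_square {S T : List α} (h : TDStep S T) :
    ∃ d, ∀ c, [c, c] <:+: T → [c, c] <:+: S ∨ c = d := by
  obtain ⟨A, Y, B, hY, rfl, rfl⟩ := h
  obtain ⟨y, Y, rfl⟩ := List.exists_cons_of_ne_nil hY
  refine ⟨y, fun c hc => ?_⟩
  rw [List.append_assoc (A ++ _)] at hc
  rcases List.pair_infix_append hc with hc | hc | hc
  · exact Or.inl (List.infix_append_of_infix_left hc)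
  · exact Or.inl (by simpa [List.append_assoc] using List.infix_append_of_infix_right hc)
  · exact Or.inr (by simpa using hc.symm)

theorem TDk.exists_new_squares : ∀ {k : ℕ} {S T : List α}, TDk k S T →
    ∃ L : List α, L.length ≤ k ∧ ∀ c, [c, c] <:+: T → [c, c] <:+: S ∨ c ∈ L
  | 0, _, _, rfl => ⟨[], le_rfl, fun _ hc => Or.inl hc⟩
  | k + 1, _, _, ⟨_, hU, hT⟩ => by
    obtain ⟨d, hd⟩ := hU.exists_new_square
    obtain ⟨L, hL, hsq⟩ := hT.exists_new_squares
    refine ⟨d :: L, by simpa using hL, fun c hc => ?_⟩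
    rcases hsq c hc with hc | hc
    · exact (hd c hc).imp_right fun (h : c = d) => h ▸ List.mem_cons_self
    · exact Or.inr (List.mem_cons_of_mem d hc)

/-- Doubling every character of an exemplar string `X` gives a string at tandem
duplication distance exactly `|X|` from `X`. -/
theorem stmt1 (X : List α) (hX : X.Nodup) :
    distTD X (X.flatMap fun x => [x, x]) = (X.length : ℕ∞) := by
  refine le_antisymm (sInf_le ⟨X.length, rfl, TDk.self_flatMap_pair X⟩) (le_sInf ?_)
  rintro _ ⟨m, rfl, hm⟩
  obtain ⟨L, hL, hsq⟩ := hm.exists_new_squares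
  have hXL : X ⊆ L := fun c hc =>
    (hsq c (List.pair_infix_flatMap_pair hc)).resolve_left (hX.not_pair_infix c)
  exact Nat.cast_le.mpr ((hX.subperm hXL).length_le.trans hL)
end

section
/- Let G be a graph, k an even positive integer, c = 3k/2, and r = c·|E(G)| − (k/2)·C(k,2). Then G contains a clique of size k if and only if there exists X ⊆ V(G) with cost(X) ≤ r, where cost(X) = c·(|E(G)| − |E(X)|) + |X|·|E(X)|. -/
/-!
Since `costCES G c X = c·|E(G)| − (c − |X|)·|E(X)|`, the cost bound says exactly
`(3j − |X|)·|E(X)| ≥ j·C(2j, 2)`. As `|E(X)| ≤ C(|X|, 2)`, with equality iff `X` is a clique,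
it suffices that over the integers `s ≥ 0` the cubic `(3j − s)·C(s, 2)` attains its
maximum `j·C(2j, 2)` only at `s = 2j`: with `t = s − 2j` the deficit is
`t·(t(t − 1) + j(3t − 1)) / 2`, and both factors have the sign of `t`.
-/

open scoped Classical

variable {V : Type*} [Fintype V]

/-- The edges of `G` with both endpoints in `X`. -/
noncomputable def edgesIn (G : SimpleGraph V) (X : Finset V) : Finset (Sym2 V) :=
  G.edgeFinset.filter (fun e => ∀ v ∈ e, v ∈ X)

/-- The cost of a subset `X` in the Cost-Effective Subgraph problem:
each edge outside `X` costs `c`, each edge inside `X` costs `|X|`. -/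
noncomputable def costCES (G : SimpleGraph V) (c : ℕ) (X : Finset V) : ℕ :=
  c * (G.edgeFinset.card - (edgesIn G X).card) + X.card * (edgesIn G X).card

open Finset

lemma edgesIn_subset_image_offDiag (G : SimpleGraph V) (X : Finset V) :
    edgesIn G X ⊆ X.offDiag.image Sym2.mk.uncurry := by
  intro e he
  rw [edgesIn, mem_filter] at he
  obtain ⟨he, hX⟩ := he
  induction e with
  | _ a b =>
    rw [SimpleGraph.mem_edgeFinset, SimpleGraph.mem_edgeSet] at he
    exact mem_image.2 ⟨(a, b), mem_offDiag.2 ⟨hX a (Sym2.mem_mk_left a b),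
      hX b (Sym2.mem_mk_right a b), he.ne⟩, rfl⟩

lemma image_offDiag_subset_edgesIn_iff {G : SimpleGraph V} {X : Finset V} :
    X.offDiag.image Sym2.mk.uncurry ⊆ edgesIn G X ↔ G.IsClique (X : Set V) := by
  simp only [subset_iff, mem_image, mem_offDiag, Prod.exists, edgesIn, mem_filter,
    SimpleGraph.mem_edgeFinset, forall_exists_index, and_imp]
  constructor
  · intro h a ha b hb hab
    exact (h a b ha hb hab rfl).1
  · rintro h _ a b ha hb hab rfl
    refine ⟨h ha hb hab, fun v hv => ?_⟩
    rcases Sym2.mem_iff.1 hv with rfl | rfl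
    exacts [ha, hb]

lemma card_edgesIn_le_choose_two (G : SimpleGraph V) (X : Finset V) :
    #(edgesIn G X) ≤ (#X).choose 2 :=
  Sym2.card_image_offDiag X ▸ card_le_card (edgesIn_subset_image_offDiag G X)

lemma card_edgesIn_eq_choose_two_iff {G : SimpleGraph V} {X : Finset V} :
    #(edgesIn G X) = (#X).choose 2 ↔ G.IsClique (X : Set V) := by
  rw [← image_offDiag_subset_edgesIn_iff, ← Sym2.card_image_offDiag]
  constructor
  · intro h
    exact (eq_of_subset_of_card_le (edgesIn_subset_image_offDiag G X) h.ge).ge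
  · intro h
    rw [subset_antisymm (edgesIn_subset_image_offDiag G X) h]

lemma costCES_le_sub_iff {R : Type*} [CommRing R] [LinearOrder R] [IsStrictOrderedRing R]
    (G : SimpleGraph V) (c : ℕ) (X : Finset V) (r : R) :
    (costCES G c X : R) ≤ c * #G.edgeFinset - r ↔ r ≤ (c - #X) * #(edgesIn G X) := by
  have : #(edgesIn G X) ≤ #G.edgeFinset := card_le_card (filter_subset _ _)
  rw [costCES]
  push_cast [Nat.cast_sub this]
  constructor <;> intro h <;> linarith

lemma sub_mul_choose_two_lt {j s : ℕ} (hj : 0 < j) (hne : s ≠ 2 * j) :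
    ((3 * j : ℚ) - s) * s.choose 2 < j * (2 * j).choose 2 := by
  have hj' : (1 : ℚ) ≤ j := by exact_mod_cast hj
  have hdeficit : 0 < ((s : ℚ) - 2 * j) *
      ((s - 2 * j) * (s - 2 * j - 1) + j * (3 * (s - 2 * j) - 1)) := by
    rcases lt_or_gt_of_ne hne with h | h
    · have : (s : ℚ) + 1 ≤ 2 * j := by exact_mod_cast h
      exact mul_pos_of_neg_of_neg (by linarith) (by nlinarith)
    · have : 2 * (j : ℚ) + 1 ≤ s := by exact_mod_cast h
      exact mul_pos (by linarith) (by nlinarith)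
  rw [Nat.cast_choose_two, Nat.cast_choose_two]
  push_cast
  linarith

lemma eq_and_eq_choose_two_of_le_sub_mul {j s e : ℕ} (hj : 0 < j) (he : e ≤ s.choose 2)
    (h : (j : ℚ) * (2 * j).choose 2 ≤ (3 * j - s) * e) : s = 2 * j ∧ e = s.choose 2 := by
  have he' : (e : ℚ) ≤ s.choose 2 := by exact_mod_cast he
  have hpos : (0 : ℚ) < j * (2 * j).choose 2 := by
    have : 0 < (2 * j).choose 2 := Nat.choose_pos (by omega)
    positivity
  have hs : s = 2 * j := by
    by_contra hne
    rcases le_or_gt s (3 * j) with hs | hs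
    · have hs' : (0 : ℚ) ≤ 3 * j - s := by rw [sub_nonneg]; exact_mod_cast hs
      nlinarith [sub_mul_choose_two_lt hj hne]
    · have hs' : (3 * j : ℚ) - s < 0 := by rw [sub_neg]; exact_mod_cast hs
      nlinarith
  subst hs
  refine ⟨rfl, le_antisymm he ?_⟩
  have : ((2 * j).choose 2 : ℚ) ≤ e := by
    refine le_of_mul_le_mul_left ?_ (show (0 : ℚ) < j by exact_mod_cast hj)
    push_cast at h
    linarith
  exact_mod_cast this

theorem stmt7_general (G : SimpleGraph V) (k j c : ℕ) (hj : k = 2 * j)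
    (hc : c = 3 * j) :
    (∃ X : Finset V, G.IsNClique k X) ↔
      ∃ X : Finset V,
        (costCES G c X : ℤ) ≤ (c : ℤ) * G.edgeFinset.card - j * k.choose 2 := by
  subst hj hc
  simp only [costCES_le_sub_iff]
  constructor
  · rintro ⟨X, hclique, hcard⟩
    refine ⟨X, ?_⟩
    rw [card_edgesIn_eq_choose_two_iff.2 hclique, hcard]
    push_cast
    linarith
  · rintro ⟨X, hX⟩
    obtain rfl | hj := j.eq_zero_or_pos
    · exact ⟨∅, by simp⟩
    have hX' : (j : ℚ) * (2 * j).choose 2 ≤ (3 * j - #X) * #(edgesIn G X) := by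
      exact_mod_cast hX
    obtain ⟨hcard, hedges⟩ :=
      eq_and_eq_choose_two_of_le_sub_mul hj (card_edgesIn_le_choose_two G X) hX'
    exact ⟨X, card_edgesIn_eq_choose_two_iff.1 hedges, hcard⟩

/-- The reduction from CLIQUE: with `k = 2j` even, `c = 3j = 3k/2` and
`r = c·|E(G)| − (k/2)·C(k,2)`, the graph `G` has a clique of size `k` iff some
`X ⊆ V(G)` has `cost(X) ≤ r`. -/
theorem stmt7 (G : SimpleGraph V) (k j c : ℕ) (hk : 0 < k) (hj : k = 2 * j)
    (hc : c = 3 * j) :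
    (∃ X : Finset V, G.IsNClique k X) ↔
      ∃ X : Finset V,
        (costCES G c X : ℤ) ≤ (c : ℤ) * G.edgeFinset.card - j * k.choose 2 :=
  stmt7_general G k j c hj hc
end

section
/- Let S be a string and let x, y be characters such that in every string S_i (i ≤ k) of a tandem-duplication sequence S = S_0 ⇒ S_1 ⇒ … ⇒ S_{i-1}, every occurrence of x is followed by y and every occurrence of y is preceded by x, but this property fails in S_i. Then the property also fails in S_j for every j ≥ i in the sequence. In particular, if the pair xy is (S,T)-stable for T = S_k, then xy is (S, S_i)-stable for every i. -/
variable {α : Type*}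

/-- The pair `xy` is stable in `T`: every occurrence of `x` in `T` is
immediately followed by `y`, and every occurrence of `y` is immediately
preceded by `x`. -/
def StablePair (x y : α) (T : List α) : Prop :=
  (∀ A B : List α, T = A ++ x :: B → ∃ B', B = y :: B') ∧
  (∀ A B : List α, T = A ++ y :: B → ∃ A', A = A' ++ [x])

lemma ends_aux {l₁ l₂ P : List α} {a : α} (h : l₁ ++ l₂ = P ++ [a]) (hne : l₂ ≠ []) :
    ∃ l₄, l₂ = l₄ ++ [a] := by
  rcases l₂.eq_nil_or_concat with rfl | ⟨l₄, b, rfl⟩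
  · exact absurd rfl hne
  · simp only [List.concat_eq_append] at h ⊢
    refine ⟨l₄, ?_⟩
    rw [← List.append_assoc] at h
    have hb := (List.append_inj' h rfl).2
    simp only [List.cons.injEq] at hb
    rw [hb.1]

lemma td_back {x y : α} {S T : List α} (h : TDStep S T) (hT : StablePair x y T) :
    StablePair x y S := by
  obtain ⟨A, X, B, hXne, hSdef, hTdef⟩ := h
  obtain ⟨hT1, hT2⟩ := hT
  constructor
  · -- every x in S followed by y
    intro P Q hPQ
    have h1 : P ++ x :: Q = (A ++ X) ++ B := by
      rw [← hPQ, hSdef]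
    rcases List.append_eq_append_iff.mp h1 with ⟨a', hM, hQ⟩ | ⟨c', hP, hB⟩
    · cases a' with
      | nil =>
        simp only [List.nil_append] at hQ
        exact hT1 (A ++ X ++ X) Q (by simp [hTdef, ← hQ])
      | cons z q =>
        simp only [List.cons_append, List.cons.injEq] at hQ
        obtain ⟨rfl, hQ⟩ := hQ
        have hocc : T = P ++ x :: (q ++ X ++ B) := by
          have h2 : A ++ X ++ X ++ B = (A ++ X) ++ (X ++ B) := by simp
          rw [hTdef, h2, hM]; simp
        obtain ⟨R, hR⟩ := hT1 _ _ hocc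
        cases q with
        | cons w q' =>
          simp only [List.cons_append, List.cons.injEq] at hR
          exact ⟨q' ++ B, by simp [hQ, hR.1]⟩
        | nil =>
          simp only [List.nil_append] at hR hM hQ
          obtain ⟨X'', hX''⟩ := ends_aux hM hXne
          have hocc2 : T = (A ++ X ++ X'') ++ x :: B := by
            rw [hTdef]; nth_rewrite 2 [hX'']; simp
          obtain ⟨B', hB'⟩ := hT1 _ _ hocc2
          exact ⟨B', by rw [hQ, hB']⟩
    · exact hT1 (A ++ X ++ X ++ c') Q (by simp [hTdef, hB])
  · -- every y in S preceded by x
    intro P Q hPQ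
    have h1 : P ++ y :: Q = A ++ (X ++ B) := by
      rw [← hPQ, hSdef]; simp
    rcases List.append_eq_append_iff.mp h1 with ⟨a', hA, hN⟩ | ⟨c', hP, hN⟩
    · cases a' with
      | nil =>
        simp only [List.nil_append] at hN
        simp only [List.append_nil] at hA
        cases X with
        | nil => exact absurd rfl hXne
        | cons z X' =>
          simp only [List.cons_append, List.cons.injEq] at hN
          obtain ⟨rfl, -⟩ := hN
          exact hT2 P (X' ++ (y :: X') ++ B) (by simp [hTdef, hA])
      | cons z q =>
        simp only [List.cons_append, List.cons.injEq] at hN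
        obtain ⟨rfl, -⟩ := hN
        exact hT2 P (q ++ X ++ X ++ B) (by simp [hTdef, hA])
    · rcases List.append_eq_append_iff.mp hN.symm with ⟨a', hX, hYQ⟩ | ⟨c'', hc', hB⟩
      · cases a' with
        | nil =>
          simp only [List.append_nil] at hX
          simp only [List.nil_append] at hYQ
          obtain ⟨P'', hP''⟩ := hT2 (A ++ X ++ X) Q (by simp [hTdef, ← hYQ])
          obtain ⟨X₄, hX₄⟩ := ends_aux (l₁ := A ++ X) (l₂ := X) (by simpa using hP'') hXne
          exact ⟨A ++ X₄, by rw [hP, ← hX]; nth_rewrite 1 [hX₄]; simp⟩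
        | cons z q =>
          simp only [List.cons_append, List.cons.injEq] at hYQ
          obtain ⟨rfl, -⟩ := hYQ
          cases c' with
          | nil =>
            simp only [List.nil_append] at hX
            obtain ⟨A', hA'⟩ := hT2 A (q ++ X ++ B) (by rw [hTdef]; nth_rewrite 1 [hX]; simp)
            exact ⟨A', by rw [hP, hA']; simp⟩
          | cons w c₀ =>
            obtain ⟨P'', hP''⟩ := hT2 (A ++ X ++ (w :: c₀)) (q ++ B)
              (by rw [hTdef]; nth_rewrite 2 [hX]; simp)
            obtain ⟨c₄, hc₄⟩ := ends_aux (l₁ := A ++ X) (l₂ := w :: c₀)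
              (by simpa using hP'') (by simp)
            exact ⟨A ++ c₄, by rw [hP, hc₄]; simp⟩
      · obtain ⟨P'', hP''⟩ := hT2 (A ++ X ++ X ++ c'') Q (by simp [hTdef, hB])
        cases c'' with
        | nil =>
          simp only [List.append_nil] at hP'' hc'
          obtain ⟨X₄, hX₄⟩ := ends_aux (l₁ := A ++ X) (l₂ := X) (by simpa using hP'') hXne
          exact ⟨A ++ X₄, by rw [hP, hc']; nth_rewrite 1 [hX₄]; simp⟩
        | cons w c₀ =>
          obtain ⟨c₄, hc₄⟩ := ends_aux (l₁ := A ++ X ++ X) (l₂ := w :: c₀)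
            (by simpa using hP'') (by simp)
          exact ⟨A ++ X ++ c₄, by rw [hP, hc', hc₄]; simp⟩

/-- Along a sequence of tandem duplications `S = Seq 0 ⇒ ⋯ ⇒ Seq k = T`,
once the stability of a pair `xy` (with `x ≠ y`) fails it fails forever; in
particular if `xy` is `(S,T)`-stable then it is `(S, Seq i)`-stable for every
`i ≤ k`. -/
theorem stmt9 (S : List α) (k : ℕ) (Seq : ℕ → List α) (hS : Seq 0 = S)
    (hstep : ∀ i < k, TDStep (Seq i) (Seq (i + 1))) (x y : α) (hxy : x ≠ y) :
    (∀ i ≤ k, ¬ StablePair x y (Seq i) →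
      ∀ j, i ≤ j → j ≤ k → ¬ StablePair x y (Seq j)) ∧
    (StablePair x y (Seq k) → ∀ i ≤ k, StablePair x y (Seq i)) := by

  have key : ∀ d i, i + d ≤ k → StablePair x y (Seq (i + d)) → StablePair x y (Seq i) := by
    intro d
    induction d with
    | zero => intro i _ h; exact h
    | succ d ih =>
      intro i h hst
      have h1 : i + d < k := by omega
      have h2 : StablePair x y (Seq (i + d + 1)) := by
        have : i + (d + 1) = i + d + 1 := by omega
        rwa [this] at hst
      exact ih i (by omega) (td_back (hstep (i + d) h1) h2)
  constructor
  · intro i hi hni j hij hjk hst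
    obtain ⟨d, rfl⟩ : ∃ d, j = i + d := ⟨j - i, by omega⟩
    exact hni (key d i hjk hst)
  · intro hst i hi
    obtain ⟨d, rfl⟩ : ∃ d, k = i + d := ⟨k - i, by omega⟩
    exact key d i le_rfl hst
end

section
/- Let S be an exemplar string and suppose dist_TD(S, T) ≤ k. Then the number of maximal (S,T)-stable substrings of S is at most 2k + 1. -/
/-!
A tandem duplication `AXB ⇒ AXXB` keeps the first and the last letter and creates at most one new
adjacency, `(last X, first X)`; so at most `k` adjacent pairs of `T` do not occur in `S`. If `xy` is
adjacent in the exemplar string `S` but not stable in `T`, then, the end letters being the same,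
some `x` in `T` is followed by a letter `z ≠ y` or some `y` is preceded by a letter `w ≠ x`. Since
no letter repeats in `S`, `xz` (resp. `wy`) is a new pair. A new pair `uv` is charged at most twice,
by the pair of `S` starting with `u` and the one ending with `v`, so at most `2k` pairs of `S` are
unstable, and `S` splits into at most `2k + 1` blocks.
-/

open scoped Classical

variable {α : Type*}

/-- The maximal `(S,T)`-stable substrings of `S`, obtained by splitting `S` at
every consecutive pair that is not stable in `T`. -/
noncomputable def blocks (S T : List α) : List (List α) :=
  S.splitBy (fun a b => decide (StablePair a b T))

/-- The number of maximal `(S,T)`-stable substrings of a nonempty `S`: one more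
than the number of consecutive pairs of `S` that are not stable in `T`. -/
noncomputable def numStable (S T : List α) : ℕ :=
  (blocks S T).length

namespace List

@[simp]
theorem consecutivePairs_nil : consecutivePairs ([] : List α) = [] := rfl

@[simp]
theorem consecutivePairs_singleton (a : α) : consecutivePairs [a] = [] := rfl

@[simp]
theorem consecutivePairs_cons_cons (a b : α) (l : List α) :
    consecutivePairs (a :: b :: l) = (a, b) :: consecutivePairs (b :: l) := rfl

theorem map_fst_consecutivePairs : ∀ l : List α, l.consecutivePairs.map Prod.fst = l.dropLast
  | [] | [_] => rfl
  | a :: b :: l => by simp [map_fst_consecutivePairs (b :: l)]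

theorem map_snd_consecutivePairs (l : List α) : l.consecutivePairs.map Prod.snd = l.tail :=
  map_snd_zip (by simp)

theorem mem_consecutivePairs {x y : α} :
    ∀ {l : List α}, (x, y) ∈ l.consecutivePairs ↔ ∃ A B, l = A ++ x :: y :: B
  | [] => by simp
  | [a] => by
    simp only [consecutivePairs_singleton, not_mem_nil, false_iff, not_exists]
    intro A B h
    have := congrArg length h
    simp at this
    omega
  | a :: b :: l => by
    rw [consecutivePairs_cons_cons, mem_cons, mem_consecutivePairs, Prod.mk.injEq]
    constructor
    · rintro (⟨rfl, rfl⟩ | ⟨A, B, h⟩)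
      · exact ⟨[], l, rfl⟩
      · exact ⟨a :: A, B, by rw [h, cons_append]⟩
    · rintro ⟨_ | ⟨c, A⟩, B, h⟩
      · simp_all
      · simp only [cons_append, cons.injEq] at h
        exact Or.inr ⟨A, B, h.2⟩

theorem IsInfix.consecutivePairs_subset {l₁ l₂ : List α} (h : l₁ <:+: l₂) :
    l₁.consecutivePairs ⊆ l₂.consecutivePairs := by
  obtain ⟨s, t, rfl⟩ := h
  rintro ⟨x, y⟩ hxy
  obtain ⟨A, B, rfl⟩ := mem_consecutivePairs.1 hxy
  exact mem_consecutivePairs.2 ⟨s ++ A, B ++ t, by simp⟩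

theorem consecutivePairs_append :
    ∀ {l₁ l₂ : List α} (h₁ : l₁ ≠ []) (h₂ : l₂ ≠ []), (l₁ ++ l₂).consecutivePairs =
      l₁.consecutivePairs ++ (l₁.getLast h₁, l₂.head h₂) :: l₂.consecutivePairs
  | [a], b :: l₂, _, _ => rfl
  | a :: b :: l₁, l₂, _, h₂ => by
    have ih := consecutivePairs_append (l₁ := b :: l₁) (cons_ne_nil _ _) h₂
    rw [cons_append] at ih
    simp [ih]

theorem Nodup.eq_of_mem_consecutivePairs_left {l : List α} (h : l.Nodup) {x y y' : α}
    (hy : (x, y) ∈ l.consecutivePairs) (hy' : (x, y') ∈ l.consecutivePairs) : y = y' := by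
  have hfst : (l.consecutivePairs.map Prod.fst).Nodup := by
    rw [map_fst_consecutivePairs]; exact h.sublist (dropLast_sublist l)
  exact congrArg Prod.snd (inj_on_of_nodup_map hfst hy hy' rfl)

theorem Nodup.eq_of_mem_consecutivePairs_right {l : List α} (h : l.Nodup) {x x' y : α}
    (hx : (x, y) ∈ l.consecutivePairs) (hx' : (x', y) ∈ l.consecutivePairs) : x = x' := by
  have hsnd : (l.consecutivePairs.map Prod.snd).Nodup := by
    rw [map_snd_consecutivePairs]; exact h.sublist (tail_sublist l)
  exact congrArg Prod.fst (inj_on_of_nodup_map hsnd hx hx' rfl)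

theorem Nodup.getLast?_ne_of_mem_consecutivePairs {l : List α} (h : l.Nodup) {x y : α}
    (hxy : (x, y) ∈ l.consecutivePairs) : l.getLast? ≠ some x := by
  intro hlast
  obtain ⟨l', rfl⟩ := getLast?_eq_some_iff.1 hlast
  have hx : x ∈ (l' ++ [x]).dropLast := by
    rw [← map_fst_consecutivePairs]; exact mem_map_of_mem hxy
  rw [dropLast_concat] at hx
  exact (nodup_append.1 h).2.2 x hx x (mem_singleton_self x) rfl

theorem Nodup.head?_ne_of_mem_consecutivePairs {l : List α} (h : l.Nodup) {x y : α}
    (hxy : (x, y) ∈ l.consecutivePairs) : l.head? ≠ some y := by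
  intro hhead
  obtain ⟨l', rfl⟩ := head?_eq_some_iff.1 hhead
  have hy : y ∈ (y :: l').tail := by
    rw [← map_snd_consecutivePairs]; exact mem_map_of_mem hxy
  exact (nodup_cons.1 h).1 hy

theorem length_splitBy_loop (r : α → α → Bool) :
    ∀ (t : List α) (a : α) (g : List α) (gs : List (List α)),
      (splitBy.loop r t a g gs).length =
        gs.length + (a :: t).consecutivePairs.countP (fun p => !r p.1 p.2) + 1
  | [], a, g, gs => by simp [splitBy.loop]
  | b :: t, a, g, gs => by
    cases hr : r a b
    · simp [splitBy.loop, hr, length_splitBy_loop r t b]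
      omega
    · simp [splitBy.loop, hr, length_splitBy_loop r t b]

theorem length_splitBy_cons (r : α → α → Bool) (a : α) (t : List α) :
    ((a :: t).splitBy r).length = (a :: t).consecutivePairs.countP (fun p => !r p.1 p.2) + 1 := by
  simp [splitBy, length_splitBy_loop]

theorem Nodup.countP_mem_le_card {l : List α} (h : l.Nodup) (s : Finset α) :
    l.countP (· ∈ s) ≤ s.card := by
  rw [countP_eq_length_filter, ← toFinset_card_of_nodup (h.filter _)]
  exact Finset.card_le_card fun x hx => by simpa using (mem_filter.1 (mem_toFinset.1 hx)).2

theorem countP_or_le (p q : α → Bool) (l : List α) :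
    l.countP (fun x => p x || q x) ≤ l.countP p + l.countP q := by
  induction l with
  | nil => rfl
  | cons a l ih => simp only [countP_cons]; split_ifs <;> simp_all <;> omega

end List

open List

noncomputable def newPairs (S T : List α) : Finset (α × α) :=
  T.consecutivePairs.toFinset \ S.consecutivePairs.toFinset

theorem TDStep.head?_eq {S T : List α} (h : TDStep S T) : S.head? = T.head? := by
  obtain ⟨A, X, B, hX, rfl, rfl⟩ := h
  obtain ⟨x, X, rfl⟩ := exists_cons_of_ne_nil hX
  simp [head?_append]

theorem TDStep.getLast?_eq {S T : List α} (h : TDStep S T) : S.getLast? = T.getLast? := by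
  obtain ⟨A, X, B, hX, rfl, rfl⟩ := h
  obtain ⟨X, x, rfl⟩ := (eq_nil_or_concat' X).resolve_left hX
  rw [show A ++ (X ++ [x]) ++ B = (A ++ X) ++ x :: B by simp,
    show A ++ (X ++ [x]) ++ (X ++ [x]) ++ B = (A ++ X ++ x :: X) ++ x :: B by simp,
    getLast?_append_cons, getLast?_append_cons]

theorem TDStep.card_newPairs_le_one {S T : List α} (h : TDStep S T) : (newPairs S T).card ≤ 1 := by
  obtain ⟨A, X, B, hX, rfl, rfl⟩ := h
  have hAX : A ++ X ≠ [] := by simp [hX]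
  have hXB : X ++ B ≠ [] := by simp [hX]
  have hsub : newPairs (A ++ X ++ B) (A ++ X ++ X ++ B) ⊆ {((A ++ X).getLast hAX, (X ++ B).head hXB)} := by
    intro p hp
    simp only [newPairs, Finset.mem_sdiff, mem_toFinset] at hp
    obtain ⟨hpT, hpS⟩ := hp
    rw [append_assoc (A ++ X), consecutivePairs_append hAX hXB, mem_append, mem_cons] at hpT
    rcases hpT with hpT | rfl | hpT
    · exact absurd ((prefix_append _ B).isInfix.consecutivePairs_subset hpT) hpS
    · exact Finset.mem_singleton_self _
    · rw [append_assoc] at hpS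
      exact absurd ((suffix_append A _).isInfix.consecutivePairs_subset hpT) hpS
  exact (Finset.card_le_card hsub).trans (Finset.card_singleton _).le

theorem TDk.eq_of_invariant {β : Type*} (f : List α → β)
    (hf : ∀ ⦃S U : List α⦄, TDStep S U → f S = f U) :
    ∀ {m : ℕ} {S T : List α}, TDk m S T → f S = f T
  | 0, _, _, h => congrArg f h
  | _ + 1, _, _, ⟨_, hSU, hUT⟩ => (hf hSU).trans (TDk.eq_of_invariant f hf hUT)

theorem TDk.card_newPairs_le : ∀ {m : ℕ} {S T : List α}, TDk m S T → (newPairs S T).card ≤ m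
  | 0, S, _, rfl => by simp [newPairs]
  | m + 1, S, T, ⟨U, hSU, hUT⟩ => by
    have htri : newPairs S T ⊆ newPairs U T ∪ newPairs S U := sdiff_triangle _ _ _
    calc (newPairs S T).card ≤ (newPairs U T).card + (newPairs S U).card :=
          (Finset.card_le_card htri).trans (Finset.card_union_le _ _)
      _ ≤ m + 1 := add_le_add hUT.card_newPairs_le hSU.card_newPairs_le_one

theorem exists_TDk_of_distTD_le {S T : List α} {k : ℕ} (h : distTD S T ≤ k) :
    ∃ m ≤ k, TDk m S T := by
  have hne : {n : ℕ∞ | ∃ m : ℕ, n = m ∧ TDk m S T}.Nonempty := by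
    by_contra hempty
    rw [Set.not_nonempty_iff_eq_empty] at hempty
    simp [distTD, hempty] at h
  obtain ⟨m, hm, hTD⟩ := csInf_mem hne
  rw [distTD, hm] at h
  exact ⟨m, by exact_mod_cast h, hTD⟩

theorem stablePair_of_consecutivePairs {x y : α} {T : List α}
    (hsucc : ∀ z, (x, z) ∈ T.consecutivePairs → z = y)
    (hpred : ∀ w, (w, y) ∈ T.consecutivePairs → w = x)
    (hlast : T.getLast? ≠ some x) (hhead : T.head? ≠ some y) : StablePair x y T := by
  constructor
  · rintro A (_ | ⟨z, B⟩) rfl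
    · exact absurd getLast?_concat hlast
    · exact ⟨B, by rw [hsucc z (mem_consecutivePairs.2 ⟨A, B, rfl⟩)]⟩
  · rintro A B rfl
    rcases eq_nil_or_concat' A with rfl | ⟨A, w, rfl⟩
    · exact absurd rfl hhead
    · exact ⟨A, by rw [hpred w (mem_consecutivePairs.2 ⟨A, B, by simp⟩)]⟩

theorem mem_image_newPairs_of_not_stablePair {S T : List α} (hS : S.Nodup)
    (hhead : S.head? = T.head?) (hlast : S.getLast? = T.getLast?) {x y : α}
    (hxy : (x, y) ∈ S.consecutivePairs) (hunstable : ¬StablePair x y T) :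
    x ∈ (newPairs S T).image Prod.fst ∨ y ∈ (newPairs S T).image Prod.snd := by
  have hold : ∀ p ∈ T.consecutivePairs, p ∉ newPairs S T → p ∈ S.consecutivePairs := by
    intro p hpT hp
    simpa [newPairs, hpT] using hp
  by_contra! hnew
  obtain ⟨hx, hy⟩ := hnew
  refine hunstable (stablePair_of_consecutivePairs (fun z hz => ?_) (fun w hw => ?_)
    (hlast ▸ hS.getLast?_ne_of_mem_consecutivePairs hxy)
    (hhead ▸ hS.head?_ne_of_mem_consecutivePairs hxy))
  · refine hS.eq_of_mem_consecutivePairs_left (hold _ hz fun hnew => hx ?_) hxy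
    exact Finset.mem_image_of_mem Prod.fst hnew
  · refine hS.eq_of_mem_consecutivePairs_right (hold _ hw fun hnew => hy ?_) hxy
    exact Finset.mem_image_of_mem Prod.snd hnew

theorem countP_not_stablePair_le {S T : List α} (hS : S.Nodup)
    (hhead : S.head? = T.head?) (hlast : S.getLast? = T.getLast?) :
    S.consecutivePairs.countP (fun p => !decide (StablePair p.1 p.2 T)) ≤
      2 * (newPairs S T).card := by
  set N := newPairs S T
  calc _ ≤ S.consecutivePairs.countP
          (fun p => decide (p.1 ∈ N.image Prod.fst) || decide (p.2 ∈ N.image Prod.snd)) :=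
        countP_mono_left fun p hp hunstable => by
          simpa using mem_image_newPairs_of_not_stablePair hS hhead hlast hp
            (by simpa using hunstable)
    _ ≤ S.dropLast.countP (· ∈ N.image Prod.fst) + S.tail.countP (· ∈ N.image Prod.snd) := by
        rw [← map_fst_consecutivePairs, ← map_snd_consecutivePairs, countP_map, countP_map]
        exact countP_or_le _ _ _
    _ ≤ (N.image Prod.fst).card + (N.image Prod.snd).card :=
        add_le_add ((hS.sublist (dropLast_sublist S)).countP_mem_le_card _)
          ((hS.sublist (tail_sublist S)).countP_mem_le_card _)
    _ ≤ 2 * N.card := by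
        have := Finset.card_image_le (s := N) (f := Prod.fst)
        have := Finset.card_image_le (s := N) (f := Prod.snd)
        omega

/-- If `S` is exemplar and `dist_TD(S,T) ≤ k`, then `S` has at most `2k + 1`
maximal `(S,T)`-stable substrings. -/
theorem stmt12 (S T : List α) (hS : S.Nodup) (k : ℕ)
    (h : distTD S T ≤ (k : ℕ∞)) :
    numStable S T ≤ 2 * k + 1 := by
  obtain ⟨m, hmk, hST⟩ := exists_TDk_of_distTD_le h
  rcases S with _ | ⟨a, s⟩
  · simp [numStable, blocks]
  have hunstable := countP_not_stablePair_le hS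
    (hST.eq_of_invariant head? fun _ _ => TDStep.head?_eq)
    (hST.eq_of_invariant getLast? fun _ _ => TDStep.getLast?_eq)
  have hnew := hST.card_newPairs_le
  rw [numStable, blocks, length_splitBy_cons]
  omega
end

section
/- If dist_TD(S,T) = k and the maximal (S,T)-stable substrings of exemplar string S are X_1,…,X_l, then there exists a sequence of k tandem duplications transforming S into T such that no duplication cuts an occurrence of any X_j (i.e., every duplicated substring, at each step, is a concatenation of full occurrences of the X_j's). -/
open scoped Classical

variable {α : Type*}

/-!
Stability of a pair is inherited backwards along tandem duplications, so every pair adjacent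
inside a block stays stable in every intermediate string, and each intermediate string is a
concatenation of whole blocks. If a duplication `AXB ⇒ AXXB` cuts a block at the left end of `X`,
between `a` and `c`, then `X` ends with `a` (in `AXXB` the second copy of `X` starts with `c`,
which is always preceded by `a`), so the window can be shifted one letter to the left without
changing the result. Once the left end lies on a block boundary, so does the right end: otherwise
the last letter of `X` would be followed, inside a block, by the first letter of `X`, which starts
a block — impossible when the blocks have no letter in common and no repeated letter.
-/

def FollowedBy (x y : α) (W : List α) : Prop :=
  ∀ P Q : List α, W = P ++ x :: Q → ∃ Q', Q = y :: Q'

theorem TDStep.reverse {U V : List α} (h : TDStep U V) : TDStep U.reverse V.reverse := by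
  obtain ⟨A, X, B, hX, rfl, rfl⟩ := h
  exact ⟨B.reverse, X.reverse, A.reverse, by simpa using hX, by simp, by simp⟩

theorem FollowedBy.of_tdStep {U V : List α} {x y : α} (h : TDStep U V)
    (hf : FollowedBy x y V) : FollowedBy x y U := by
  obtain ⟨A, X, B, hX, rfl, rfl⟩ := h
  obtain ⟨x₀, X, rfl⟩ := List.exists_cons_of_ne_nil hX
  intro P Q hPQ
  rw [List.append_assoc] at hPQ
  rcases List.append_eq_append_iff.1 hPQ with ⟨P', rfl, hR⟩ | ⟨_ | ⟨z, A'⟩, hA, hxQ⟩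
  · exact hf (A ++ (x₀ :: X) ++ P') Q (by simp [hR])
  · exact hf (A ++ x₀ :: X) Q (by simp_all)
  · obtain ⟨rfl, rfl⟩ : z = x ∧ Q = A' ++ (x₀ :: X ++ B) := by simpa [eq_comm] using hxQ
    obtain ⟨Q', hQ'⟩ := hf P (A' ++ x₀ :: X ++ x₀ :: X ++ B) (by simp [hA])
    cases A' <;> simp_all

theorem stablePair_iff_followedBy {x y : α} {W : List α} :
    StablePair x y W ↔ FollowedBy x y W ∧ FollowedBy y x W.reverse := by
  refine and_congr_right' ⟨fun h P Q hPQ => ?_, fun h A B hAB => ?_⟩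
  · obtain ⟨A', hA'⟩ := h Q.reverse P.reverse (by simpa using congrArg List.reverse hPQ)
    exact ⟨A'.reverse, by simpa using congrArg List.reverse hA'⟩
  · obtain ⟨Q', hQ'⟩ := h B.reverse A.reverse (by simp [hAB])
    exact ⟨Q'.reverse, by simpa using congrArg List.reverse hQ'⟩

theorem StablePair.of_tdStep {U V : List α} {x y : α} (h : TDStep U V)
    (hs : StablePair x y V) : StablePair x y U := by
  rw [stablePair_iff_followedBy] at hs ⊢
  exact ⟨hs.1.of_tdStep h, hs.2.of_tdStep h.reverse⟩

theorem StablePair.of_tdk {U T : List α} {x y : α} {n : ℕ} (h : TDk n U T)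
    (hs : StablePair x y T) : StablePair x y U := by
  induction n generalizing U with
  | zero => exact h ▸ hs
  | succ n ih =>
    obtain ⟨V, hUV, hVT⟩ := h
    exact (ih hVT).of_tdStep hUV

theorem tdk_of_distTD_eq {S T : List α} {k : ℕ} (h : distTD S T = k) : TDk k S T := by
  have hne : {n : ℕ∞ | ∃ m : ℕ, n = m ∧ TDk m S T}.Nonempty := by
    by_contra hempty
    rw [distTD, Set.not_nonempty_iff_eq_empty.1 hempty, sInf_empty] at h
    exact ENat.top_ne_natCast k h
  obtain ⟨m, hm, hmT⟩ := csInf_mem hne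
  rw [← distTD, h, Nat.cast_inj] at hm
  exact hm ▸ hmT

section Expansion

variable (bs : List (List α))

def expand (I : List ℕ) : List α := I.flatMap (fun j => bs.getD j [])

def InnerPair (x y : α) : Prop := ∃ b ∈ bs, [x, y] <:+: b

variable {bs}

@[simp] theorem expand_nil : expand bs [] = [] := rfl

@[simp] theorem expand_cons (j : ℕ) (I : List ℕ) :
    expand bs (j :: I) = bs.getD j [] ++ expand bs I := List.flatMap_cons

@[simp] theorem expand_append (I J : List ℕ) :
    expand bs (I ++ J) = expand bs I ++ expand bs J := List.flatMap_append

theorem expand_range : expand bs (List.range bs.length) = bs.flatten := by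
  rw [expand, List.flatMap_def]
  congr 1
  refine List.ext_getElem (by simp) fun i _ _ => ?_
  simp_all

theorem mem_of_getD_eq {j : ℕ} {b : List α} (h : bs.getD j [] = b) (hb : b ≠ []) :
    b ∈ bs := by
  rw [List.getD_eq_getElem?_getD] at h
  cases hj : bs[j]? with
  | none => simp [hj, ← h] at hb
  | some b' => simpa [hj, ← h] using List.mem_of_getElem? hj

theorem exists_cons_mem_of_expand_eq_cons {I : List ℕ} {c : α} {W : List α}
    (h : expand bs I = c :: W) : ∃ r, c :: r ∈ bs := by
  induction I generalizing W with
  | nil => simp at h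
  | cons j I ih =>
    rw [expand_cons] at h
    rcases hb : bs.getD j [] with _ | ⟨z, r⟩
    · rw [hb, List.nil_append] at h
      exact ih h
    · rw [hb, List.cons_append, List.cons.injEq] at h
      exact ⟨r, h.1 ▸ mem_of_getD_eq hb (List.cons_ne_nil z r)⟩

theorem not_innerPair_of_cons_mem (hnod : bs.flatten.Nodup) {c w : α} {r : List α}
    (hb : c :: r ∈ bs) : ¬ InnerPair bs w c := by
  rintro ⟨b, hb', hwc⟩
  obtain ⟨hblocks, hdisj⟩ := List.nodup_flatten.1 hnod
  by_cases hrb : c :: r = b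
  · subst hrb
    have hcr : c ∈ r := by
      rcases List.infix_cons_iff.1 hwc with hpre | hinf
      · exact (List.cons_prefix_cons.1 hpre).2.subset (List.mem_singleton_self c)
      · exact hinf.subset (by simp)
    exact (List.nodup_cons.1 (hblocks _ hb)).1 hcr
  · have : Std.Symm (List.Disjoint (α := α)) := ⟨fun _ _ h => h.symm⟩
    exact List.disjoint_left.1 (hdisj.forall hb hb' hrb) List.mem_cons_self
      (hwc.subset (by simp))

theorem expand_eq_append_cases {I : List ℕ} {A C : List α} (h : expand bs I = A ++ C) :
    (∃ I₁ I₂, I = I₁ ++ I₂ ∧ expand bs I₁ = A ∧ expand bs I₂ = C) ∨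
      ∃ A₀ a c C₀, A = A₀ ++ [a] ∧ C = c :: C₀ ∧ InnerPair bs a c := by
  induction I generalizing A with
  | nil =>
    obtain ⟨rfl, rfl⟩ := List.append_eq_nil_iff.1 h.symm
    exact Or.inl ⟨[], [], rfl, rfl, rfl⟩
  | cons j I ih =>
    rw [expand_cons] at h
    generalize hbj : bs.getD j [] = b at h
    rcases List.append_eq_append_iff.1 h with ⟨A', rfl, hI⟩ | ⟨_ | ⟨c, C₀⟩, hb, rfl⟩
    · rcases ih hI with ⟨I₁, I₂, rfl, h₁, h₂⟩ | ⟨A₀, a, c, C₀, rfl, hC, hac⟩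
      · exact Or.inl ⟨j :: I₁, I₂, rfl, by rw [expand_cons, hbj, h₁], h₂⟩
      · exact Or.inr ⟨b ++ A₀, a, c, C₀, by simp, hC, hac⟩
    · exact Or.inl ⟨[j], I, rfl, by rw [expand_cons, hbj, hb]; simp, by simp⟩
    · rcases A.eq_nil_or_concat' with rfl | ⟨A₀, a, rfl⟩
      · exact Or.inl ⟨[], j :: I, rfl, rfl, by rw [expand_cons, hbj, hb]; simp⟩
      · exact Or.inr ⟨A₀, a, c, C₀ ++ expand bs I, rfl, rfl, b,
          mem_of_getD_eq hbj (by simp [hb]), A₀, C₀, by simp [hb]⟩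

theorem exists_tdStep_expand_of_eq (hnod : bs.flatten.Nodup) {V : List α}
    (hstab : ∀ a c, InnerPair bs a c → StablePair a c V) (A X B : List α) {I : List ℕ}
    (hX : X ≠ []) (hI : expand bs I = A ++ X ++ B) (hV : V = A ++ X ++ X ++ B) :
    ∃ I', TDStep I I' ∧ expand bs I' = V := by
  rw [List.append_assoc] at hI
  rcases expand_eq_append_cases hI with
    ⟨IA, IR, rfl, hA, hR⟩ | ⟨A₀, a, c, C₀, rfl, hXB, hac⟩
  · rcases expand_eq_append_cases hR with
      ⟨IX, IB, rfl, hIX, hIB⟩ | ⟨X₀, x, d, B₀, rfl, rfl, hxd⟩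
    · refine ⟨IA ++ IX ++ IX ++ IB, ⟨IA, IX, IB, ?_, by simp, rfl⟩,
        by simp [hA, hIX, hIB, hV]⟩
      rintro rfl
      exact hX hIX.symm
    · obtain ⟨Q, hQ⟩ := (hstab x d hxd).1 (A ++ X₀) (X₀ ++ [x] ++ d :: B₀) (by simp [hV])
      obtain ⟨r, hr⟩ := exists_cons_mem_of_expand_eq_cons (hR.trans hQ)
      exact absurd hxd (not_innerPair_of_cons_mem hnod hr)
  · obtain ⟨X', rfl⟩ : ∃ X', X = c :: X' := by
      obtain ⟨x₀, X', rfl⟩ := List.exists_cons_of_ne_nil hX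
      simp_all
    obtain ⟨A', hA'⟩ := (hstab a c hac).2 (A₀ ++ [a] ++ c :: X') (X' ++ B) (by simp [hV])
    obtain ⟨X₁, hX₁⟩ : ∃ X₁, c :: X' = X₁ ++ [a] := by
      obtain ⟨X₁, x, hX₁⟩ :=
        (List.eq_nil_or_concat' (c :: X')).resolve_left (List.cons_ne_nil _ _)
      have := congrArg List.getLast? hA'
      simp only [hX₁, ← List.append_assoc, List.getLast?_concat, Option.some.injEq] at this
      exact ⟨X₁, this ▸ hX₁⟩
    rw [hX₁] at hI hV
    -- `A₀ a (X₁ a) (X₁ a) B = A₀ (a X₁) (a X₁) (a B)`: the window moves one letter left.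
    exact exists_tdStep_expand_of_eq hnod hstab A₀ (a :: X₁) (a :: B) (List.cons_ne_nil _ _)
      (by simp [hI]) (by simp [hV])
termination_by A.length

theorem exists_tdk_expand (hnod : bs.flatten.Nodup) {T : List α}
    (hstab : ∀ a c, InnerPair bs a c → StablePair a c T) {k : ℕ} {U : List α} {I : List ℕ}
    (hI : expand bs I = U) (h : TDk k U T) : ∃ I', TDk k I I' ∧ expand bs I' = T := by
  induction k generalizing U I with
  | zero => exact ⟨I, rfl, hI.trans h⟩
  | succ k ih =>
    obtain ⟨V, ⟨A, X, B, hX, rfl, hV⟩, hVT⟩ := h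
    obtain ⟨I₁, hII₁, hI₁⟩ := exists_tdStep_expand_of_eq hnod
      (fun a c hac => (hstab a c hac).of_tdk hVT) A X B hX hI hV
    obtain ⟨I', hI₁I', hI'⟩ := ih hI₁ hVT
    exact ⟨I', ⟨I₁, hII₁, hI₁I'⟩, hI'⟩

end Expansion

/-- If `dist_TD(S,T) = k` with `S` exemplar, then there is a sequence of `k`
tandem duplications from `S` to `T` in which no duplication cuts an occurrence
of a maximal `(S,T)`-stable substring: equivalently, `T` is the expansion of a
string `T'` of block indices reachable from `S' = [0, …, l-1]` by exactly `k`
tandem duplications performed at the level of whole blocks. -/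
theorem stmt15 (S T : List α) (hS : S.Nodup) (k : ℕ)
    (h : distTD S T = (k : ℕ∞)) :
    ∃ T' : List ℕ,
      T'.flatMap (fun j => (blocks S T).getD j []) = T ∧
      TDk k (List.range (blocks S T).length) T' := by
  have hflat : (blocks S T).flatten = S := List.flatten_splitBy _ _
  have hstab : ∀ a c, InnerPair (blocks S T) a c → StablePair a c T := by
    rintro a c ⟨b, hb, hac⟩
    simpa using List.isChain_pair.1 ((List.isChain_of_mem_splitBy hb).infix hac)
  obtain ⟨T', hT', hexp⟩ := exists_tdk_expand (hflat.symm ▸ hS) hstab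
    (expand_range.trans hflat) (tdk_of_distTD_eq h)
  exact ⟨T', hexp, hT'⟩
end
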